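/- Under the Dawid–Skene model with a decomposable aggregation rule: for all ε, δ ∈ (0,1), setting A = H(ε) + (1/N)·ln(1/δ) with H(ε) = −ε·ln ε − (1−ε)·ln(1−ε), and G = 1 + exp(A/(1−ε)), if t̃ ≤ −sqrt(2·ln G), then the error rate satisfies E_N ≥ ε with probability at least 1 − δ. -/

import Mathlib

open MeasureTheory ProbabilityTheory Real

noncomputable section

namespace CrowdDS

/-- Conditional law of the label `Z i j` (valued in `Fin (L+1)`, `0` = missing) given the
true label `y j = k`, under the general Dawid–Skene model with assignment probabilities `q`
and confusion matrices `p` (where `p i k h` is the probability of reporting label `h.succ`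
given true label `k`). -/
def condLaw {M N L : ℕ} (q : Fin M → Fin N → ℝ) (p : Fin M → Fin L → Fin L → ℝ)
    (i : Fin M) (j : Fin N) (k : Fin L) (h : Fin (L + 1)) : ℝ :=
  if hz : h = 0 then 1 - q i j else q i j * p i k (h.pred hz)

/-- The normalizing quantity `N̄`. -/
def nbar {M L : ℕ} (f : Fin M → Fin L → Fin (L + 1) → ℝ) : ℝ :=
  Real.sqrt (∑ i, (sSup {x : ℝ | ∃ k l h : Fin L, k ≠ l ∧
    x = |f i k h.succ - f i l h.succ|}) ^ 2)

/-- Expected gap `Δ_j(k,l)` of the aggregated scores. -/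
def gap {M N L : ℕ} (f : Fin M → Fin L → Fin (L + 1) → ℝ) (a : Fin L → ℝ)
    (q : Fin M → Fin N → ℝ) (p : Fin M → Fin L → Fin L → ℝ)
    (j : Fin N) (k l : Fin L) : ℝ :=
  (∑ i, ∑ h : Fin L, q i j * (f i k h.succ - f i l h.succ) * p i k h) + (a k - a l)

/-- `τ_j^min`. -/
def tauMin {M N L : ℕ} (f : Fin M → Fin L → Fin (L + 1) → ℝ) (a : Fin L → ℝ)
    (q : Fin M → Fin N → ℝ) (p : Fin M → Fin L → Fin L → ℝ) (j : Fin N) : ℝ :=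
  sInf {x : ℝ | ∃ k l : Fin L, k ≠ l ∧ x = gap f a q p j k l / nbar f}

/-- `τ_j^max`. -/
def tauMax {M N L : ℕ} (f : Fin M → Fin L → Fin (L + 1) → ℝ) (a : Fin L → ℝ)
    (q : Fin M → Fin N → ℝ) (p : Fin M → Fin L → Fin L → ℝ) (j : Fin N) : ℝ :=
  sSup {x : ℝ | ∃ k l : Fin L, k ≠ l ∧ x = gap f a q p j k l / nbar f}

/-- `t̄ = min_j τ_j^min`. -/
def tbar {M N L : ℕ} (f : Fin M → Fin L → Fin (L + 1) → ℝ) (a : Fin L → ℝ)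
    (q : Fin M → Fin N → ℝ) (p : Fin M → Fin L → Fin L → ℝ) : ℝ :=
  sInf {x : ℝ | ∃ j : Fin N, x = tauMin f a q p j}

/-- `t̃ = max_j τ_j^max`. -/
def ttil {M N L : ℕ} (f : Fin M → Fin L → Fin (L + 1) → ℝ) (a : Fin L → ℝ)
    (q : Fin M → Fin N → ℝ) (p : Fin M → Fin L → Fin L → ℝ) : ℝ :=
  sSup {x : ℝ | ∃ j : Fin N, x = tauMax f a q p j}

/-- The constant `c`. -/
def cConst {M L : ℕ} (f : Fin M → Fin L → Fin (L + 1) → ℝ) : ℝ :=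
  (1 / nbar f) * sSup {x : ℝ | ∃ (i : Fin M) (k l h : Fin L), k ≠ l ∧
    x = |f i k h.succ - f i l h.succ|}

/-- The variance proxy `σ²`. -/
def sigmaSq {M N L : ℕ} (f : Fin M → Fin L → Fin (L + 1) → ℝ)
    (q : Fin M → Fin N → ℝ) (p : Fin M → Fin L → Fin L → ℝ) : ℝ :=
  (1 / (nbar f) ^ 2) * sSup {x : ℝ | ∃ (j : Fin N) (k l : Fin L), k ≠ l ∧
    x = ∑ i, ∑ h : Fin L, q i j * (f i k h.succ - f i l h.succ) ^ 2 * p i k h}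

/-- The error rate `E_N`. -/
def errRate {Ω : Type*} {N L : ℕ} (y yhat : Fin N → Ω → Fin L) (ω : Ω) : ℝ :=
  (N : ℝ)⁻¹ * ∑ j, if yhat j ω ≠ y j ω then (1 : ℝ) else 0

/-- `φ(x) = exp(−x²/2)`. -/
def phi (x : ℝ) : ℝ := Real.exp (-x ^ 2 / 2)

/-- Kullback–Leibler divergence between Bernoulli distributions. -/
def klBer (x y : ℝ) : ℝ := x * Real.log (x / y) + (1 - x) * Real.log ((1 - x) / (1 - y))

end CrowdDS

/-!
Fix for every label `k` a rival label `rival k ≠ k`. If item `j` is labelled correctly, then the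
aggregated score of its true label is at least that of the rival. Given `y j = k` the worker labels
are independent, the expected score gap is `Δ_j(k, rival k) ≤ t̃ N̄ ≤ -N̄ sqrt (2 log G)`, and each
summand of the score gap ranges in an interval of half-length `max_{k≠l,h} |f_i(k,h) - f_i(l,h)|`,
so Hoeffding's inequality bounds the probability of this event by `1/G`. These events are
independent across items, and `E_N < ε` forces `m = ⌈(1-ε)N⌉` of them to occur simultaneously,
which has probability at most `C(N,m) G^{-m}`. Since `C(N,m) (1-ε)^m ε^(N-m) ≤ 1`, the choice of
`G` makes this at most `δ`.
-/

open Finset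
open scoped NNReal

theorem sum_prod_le_exp_of_le_sum_sub_mean {ι α : Type*} [Fintype ι] [DecidableEq ι] [Fintype α]
    {w : ι → α → ℝ} (hw0 : ∀ i a, 0 ≤ w i a) (hw1 : ∀ i, ∑ a, w i a = 1)
    {g : ι → α → ℝ} {D : ι → ℝ} (hg : ∀ i a, |g i a| ≤ D i) {s : ℝ} (hs : 0 ≤ s) :
    ∑ x : ι → α with s ≤ ∑ i, (g i (x i) - ∑ a, w i a * g i a), ∏ i, w i (x i)
      ≤ exp (-s ^ 2 / (2 * ∑ i, D i ^ 2)) := by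
  -- Realise the weights as the coordinate laws of a product measure `P`.
  let _ : MeasurableSpace α := ⊤
  have : DiscreteMeasurableSpace α := ⟨fun _ => trivial⟩
  let ν : ι → Measure α := fun i => (PMF.ofFintype (fun a => ENNReal.ofReal (w i a)) (by
    rw [← ENNReal.ofReal_sum_of_nonneg fun a _ => hw0 i a, hw1 i, ENNReal.ofReal_one])).toMeasure
  have hν : ∀ i a, (ν i).real {a} = w i a := fun i a => by
    simp only [ν, measureReal_def, PMF.toMeasure_apply_singleton _ _ (measurableSet_singleton a),
      PMF.ofFintype_apply, ENNReal.toReal_ofReal (hw0 i a)]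
  have hmean : ∀ i, ∫ a, g i a ∂ν i = ∑ a, w i a * g i a := fun i => by
    simp [integral_fintype Integrable.of_finite, hν]
  let P := Measure.pi ν
  have hP : ∀ x, P.real {x} = ∏ i, w i (x i) := fun x => by
    simp only [P, measureReal_def, Measure.pi_singleton, ENNReal.toReal_prod, ← hν]
  let X : ι → α → ℝ := fun i a => g i a - ∑ a, w i a * g i a
  have hsubG : ∀ i, HasSubgaussianMGF (fun x : ι → α => X i (x i)) ((‖D i - -D i‖₊ / 2) ^ 2) P :=
    fun i => by
      have := hasSubgaussianMGF_of_mem_Icc (μ := ν i) (X := g i)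
        Measurable.of_discrete.aemeasurable (ae_of_all _ fun a => abs_le.mp (hg i a))
      rw [hmean, ← (measurePreserving_eval ν i).map_eq] at this
      exact HasSubgaussianMGF.of_map (μ := P) (Y := Function.eval i) (X := X i)
        (measurable_pi_apply i).aemeasurable this
  have hindep : iIndepFun (fun i (x : ι → α) => X i (x i)) P :=
    iIndepFun_pi fun _ => Measurable.of_discrete.aemeasurable
  have hvar : ((∑ i, (‖D i - -D i‖₊ / 2) ^ 2 : ℝ≥0) : ℝ) = ∑ i, D i ^ 2 := by
    push_cast
    refine sum_congr rfl fun i _ => ?_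
    rw [Real.norm_eq_abs, sub_neg_eq_add, ← two_mul, abs_mul, abs_two,
      mul_div_cancel_left₀ _ two_ne_zero, sq_abs]
  calc _ = P.real {x | s ≤ ∑ i, X i (x i)} := by
        rw [← coe_filter_univ, ← sum_measureReal_singleton]
        simp_rw [hP]
        rfl
    _ ≤ _ := hvar ▸ HasSubgaussianMGF.measure_sum_ge_le_of_iIndepFun hindep (fun i _ => hsubG i) hs

theorem measureReal_mem_le_of_forall_sum_le {Ω α β : Type*} [MeasurableSpace Ω]
    {μ : Measure Ω} [IsProbabilityMeasure μ]
    [Fintype α] [MeasurableSpace α] [MeasurableSingletonClass α]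
    [Fintype β] [MeasurableSpace β] [MeasurableSingletonClass β]
    {Y : Ω → α} {X : Ω → β} (hY : Measurable Y) (hX : Measurable X) {w : α → β → ℝ}
    (hlaw : ∀ k x, μ.real {ω | Y ω = k ∧ X ω = x} = μ.real {ω | Y ω = k} * w k x)
    {S : α → Finset β} {θ : ℝ} (hS : ∀ k, ∑ x ∈ S k, w k x ≤ θ) :
    μ.real {ω | X ω ∈ S (Y ω)} ≤ θ := by
  classical
  let T : Finset (α × β) := univ.filter fun v => v.2 ∈ S v.1
  calc μ.real {ω | X ω ∈ S (Y ω)} = μ.real ((fun ω => (Y ω, X ω)) ⁻¹' T) := by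
        congr 1; ext ω; simp [T]
    _ = ∑ v ∈ T, μ.real {ω | Y ω = v.1 ∧ X ω = v.2} := by
        rw [← sum_measureReal_preimage_singleton T
          fun v _ => hY.prodMk hX (measurableSet_singleton v)]
        simp only [Set.preimage, Set.mem_singleton_iff, Prod.ext_iff]
    _ = ∑ k, μ.real {ω | Y ω = k} * ∑ x ∈ S k, w k x := by
        rw [sum_finset_product T univ S (by simp [T])]
        simp_rw [hlaw, mul_sum]
    _ ≤ ∑ k, μ.real {ω | Y ω = k} * θ :=
        sum_le_sum fun k _ => mul_le_mul_of_nonneg_left (hS k) measureReal_nonneg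
    _ = θ := by
        rw [← sum_mul]
        change (∑ k ∈ univ, μ.real (Y ⁻¹' {k})) * θ = θ
        rw [sum_measureReal_preimage_singleton univ fun k _ => hY (measurableSet_singleton k)]
        simp

theorem ProbabilityTheory.iIndepFun.iIndepSet_preimage {Ω ι : Type*} [MeasurableSpace Ω]
    {μ : Measure Ω} {β : ι → Type*} [∀ j, MeasurableSpace (β j)] {V : ∀ j, Ω → β j}
    (hV : iIndepFun V μ) (hVm : ∀ j, Measurable (V j)) {T : ∀ j, Set (β j)}
    (hT : ∀ j, MeasurableSet (T j)) : iIndepSet (fun j => V j ⁻¹' T j) μ :=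
  (iIndepSet_iff_meas_biInter fun j => hVm j (hT j)).2 fun s =>
    hV.measure_inter_preimage_eq_mul s fun j _ => hT j

theorem ProbabilityTheory.iIndepSet.measureReal_le_card_mem_le {Ω ι : Type*}
    [MeasurableSpace Ω] {μ : Measure Ω} [Fintype ι] {B : ι → Set Ω}
    [∀ ω j, Decidable (ω ∈ B j)] (hB : iIndepSet B μ) {θ : ℝ} (hθ : ∀ j, μ.real (B j) ≤ θ)
    (m : ℕ) :
    μ.real {ω | m ≤ #{j | ω ∈ B j}} ≤ (Fintype.card ι).choose m * θ ^ m := by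
  classical
  have := hB.isProbabilityMeasure
  have hcover : {ω | m ≤ #{j | ω ∈ B j}} ⊆ ⋃ T ∈ powersetCard m univ, ⋂ j ∈ T, B j := by
    intro ω hω
    obtain ⟨T, hT, hTm⟩ := exists_subset_card_eq hω
    simp only [Set.mem_iUnion, Set.mem_iInter, mem_powersetCard_univ]
    exact ⟨T, hTm, fun j hj => (mem_filter.mp (hT hj)).2⟩
  calc μ.real {ω | m ≤ #{j | ω ∈ B j}}
      ≤ ∑ T ∈ powersetCard m univ, μ.real (⋂ j ∈ T, B j) :=
        (measureReal_mono hcover (measure_ne_top _ _)).trans (measureReal_biUnion_finset_le _ _)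
    _ ≤ ∑ T ∈ powersetCard m (univ : Finset ι), θ ^ m := by
        refine sum_le_sum fun T hT => ?_
        rw [measureReal_def, hB.meas_biInter, ENNReal.toReal_prod,
          ← mem_powersetCard_univ.mp hT, ← prod_const]
        exact prod_le_prod (fun j _ => measureReal_nonneg) fun j _ => hθ j
    _ = (Fintype.card ι).choose m * θ ^ m := by simp

lemma one_sub_le_probReal_of_probReal_lt_le {Ω : Type*} [MeasurableSpace Ω] {μ : Measure Ω}
    [IsProbabilityMeasure μ] {F : Ω → ℝ} {ε δ : ℝ} (h : μ.real {ω | F ω < ε} ≤ δ) :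
    1 - δ ≤ μ.real {ω | ε ≤ F ω} := by
  have hcover := measureReal_union_le (μ := μ) {ω | ε ≤ F ω} {ω | F ω < ε}
  rw [show {ω | ε ≤ F ω} ∪ {ω | F ω < ε} = Set.univ by ext; simp [le_or_gt], probReal_univ]
    at hcover
  linarith

theorem choose_mul_pow_mul_pow_le_one {N m : ℕ} (hm : m ≤ N) {p : ℝ} (hp0 : 0 ≤ p)
    (hp1 : p ≤ 1) : N.choose m * (p ^ m * (1 - p) ^ (N - m)) ≤ 1 := by
  have hq : 0 ≤ 1 - p := by linarith
  calc N.choose m * (p ^ m * (1 - p) ^ (N - m))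
      = p ^ m * (1 - p) ^ (N - m) * N.choose m := by ring
    _ ≤ ∑ k ∈ range (N + 1), p ^ k * (1 - p) ^ (N - k) * N.choose k :=
        single_le_sum (f := fun k => p ^ k * (1 - p) ^ (N - k) * N.choose k)
          (fun k _ => by positivity) (mem_range.mpr (Nat.lt_succ_of_le hm))
    _ = 1 := by rw [← add_pow, add_sub_cancel, one_pow]

theorem choose_mul_inv_one_add_exp_pow_le {N m : ℕ} (hN : 0 < N) {ε δ X : ℝ} (hε0 : 0 < ε)
    (hε1 : ε < 1) (hδ0 : 0 < δ) (hδ1 : δ ≤ 1)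
    (hX : binEntropy ε + (N : ℝ)⁻¹ * log δ⁻¹ ≤ (1 - ε) * X) (hm : (1 - ε) * N ≤ m) :
    N.choose m * (1 + exp X)⁻¹ ^ m ≤ δ := by
  rcases lt_or_ge N m with hNm | hmN
  · simp [Nat.choose_eq_zero_of_lt hNm, hδ0.le]
  have h1ε : 0 < 1 - ε := by linarith
  set c := (N : ℝ)⁻¹ * log δ⁻¹
  set u := X + log (1 - ε) - log ε
  have hc : 0 ≤ c := mul_nonneg (by positivity) (log_nonneg (one_le_inv₀ hδ0 |>.mpr hδ1))
  have hNc : N * c = -log δ := by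
    simp only [c, log_inv]; field_simp
  -- `hX` in disguise, since `H(ε) = -ε log ε - (1 - ε) log (1 - ε)`.
  have hu : -log ε + c ≤ (1 - ε) * u := by
    simp only [binEntropy, log_inv] at hX; nlinarith
  have hu0 : 0 ≤ u := by nlinarith [log_neg hε0 hε1]
  have hmu : (1 - ε) * N * u ≤ m * u := mul_le_mul_of_nonneg_right hm hu0
  have hNu : N * (-log ε + c) ≤ N * ((1 - ε) * u) := by gcongr
  set b := (1 - ε) ^ m * ε ^ (N - m)
  have hb : 0 < b := by positivity
  have hchoose : (N.choose m : ℝ) ≤ b⁻¹ := by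
    rw [← one_div, le_div_iff₀ hb]
    simpa [b, sub_sub_cancel] using choose_mul_pow_mul_pow_le_one hmN h1ε.le (by linarith)
  have hexp : exp (-X) ^ m ≤ δ * b := by
    rw [← log_le_log_iff (by positivity) (by positivity), log_pow, log_exp,
      log_mul hδ0.ne' hb.ne', log_mul (by positivity) (by positivity), log_pow, log_pow,
      Nat.cast_sub hmN]
    linarith
  calc N.choose m * (1 + exp X)⁻¹ ^ m ≤ b⁻¹ * exp (-X) ^ m := by
        gcongr
        rw [exp_neg]
        exact inv_anti₀ (exp_pos X) (by linarith [exp_pos X])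
    _ ≤ b⁻¹ * (δ * b) := by gcongr
    _ = δ := by field_simp

lemma exp_neg_sqrt_two_mul_log_sq_div_two {G : ℝ} (hG : 1 ≤ G) :
    exp (-sqrt (2 * log G) ^ 2 / 2) = G⁻¹ := by
  rw [sq_sqrt (mul_nonneg zero_le_two (log_nonneg hG)), neg_div,
    mul_div_cancel_left₀ _ two_ne_zero, exp_neg, exp_log (by linarith)]

namespace CrowdDS

variable {M N L : ℕ} {f : Fin M → Fin L → Fin (L + 1) → ℝ} {a : Fin L → ℝ}
  {q : Fin M → Fin N → ℝ} {p : Fin M → Fin L → Fin L → ℝ}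

def spread (f : Fin M → Fin L → Fin (L + 1) → ℝ) (i : Fin M) : ℝ :=
  sSup {x : ℝ | ∃ k l h : Fin L, k ≠ l ∧ x = |f i k h.succ - f i l h.succ|}

lemma spread_nonneg (f : Fin M → Fin L → Fin (L + 1) → ℝ) (i : Fin M) : 0 ≤ spread f i :=
  Real.sSup_nonneg (by rintro _ ⟨_, _, _, _, rfl⟩; exact abs_nonneg _)

lemma abs_sub_le_spread (hf0 : ∀ i k k', f i k 0 = f i k' 0) (i : Fin M) {k l : Fin L}
    (hkl : k ≠ l) (h : Fin (L + 1)) : |f i k h - f i l h| ≤ spread f i := by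
  cases h using Fin.cases with
  | zero => rw [hf0 i k l, sub_self, abs_zero]; exact spread_nonneg f i
  | succ h =>
    refine le_csSup ?_ ⟨k, l, h, hkl, rfl⟩
    refine ((Set.finite_range fun t : Fin L × Fin L × Fin L =>
      |f i t.1 t.2.2.succ - f i t.2.1 t.2.2.succ|).subset ?_).bddAbove
    rintro _ ⟨k, l, h, -, rfl⟩
    exact ⟨(k, l, h), rfl⟩

lemma nbar_sq (f : Fin M → Fin L → Fin (L + 1) → ℝ) : nbar f ^ 2 = ∑ i, spread f i ^ 2 :=
  sq_sqrt (sum_nonneg fun _ _ => sq_nonneg _)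

lemma condLaw_nonneg (hq0 : ∀ i j, 0 ≤ q i j) (hq1 : ∀ i j, q i j ≤ 1)
    (hp0 : ∀ i k h, 0 ≤ p i k h) (i : Fin M) (j : Fin N) (k : Fin L) (h : Fin (L + 1)) :
    0 ≤ condLaw q p i j k h := by
  unfold condLaw
  split_ifs
  · linarith [hq1 i j]
  · exact mul_nonneg (hq0 i j) (hp0 i k _)

lemma sum_condLaw (hp1 : ∀ i k, ∑ h, p i k h = 1) (i : Fin M) (j : Fin N) (k : Fin L) :
    ∑ h, condLaw q p i j k h = 1 := by
  simp [condLaw, Fin.sum_univ_succ, ← mul_sum, hp1]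

lemma sum_condLaw_mul_sub_add_eq_gap (hf0 : ∀ i k k', f i k 0 = f i k' 0)
    (j : Fin N) (k l : Fin L) :
    (∑ i, ∑ h, condLaw q p i j k h * (f i k h - f i l h)) + (a k - a l) = gap f a q p j k l := by
  simp only [gap, Fin.sum_univ_succ, hf0 _ k l, sub_self, mul_zero, zero_add, condLaw,
    Fin.succ_ne_zero, dite_false, Fin.pred_succ]
  congr 1
  refine sum_congr rfl fun i _ => sum_congr rfl fun h _ => ?_
  ring

lemma gap_div_nbar_le_ttil {j : Fin N} {k l : Fin L} (hkl : k ≠ l) :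
    gap f a q p j k l / nbar f ≤ ttil f a q p := by
  have hτ : gap f a q p j k l / nbar f ≤ tauMax f a q p j := by
    refine le_csSup ?_ ⟨k, l, hkl, rfl⟩
    refine ((Set.finite_range fun t : Fin L × Fin L =>
      gap f a q p j t.1 t.2 / nbar f).subset ?_).bddAbove
    rintro _ ⟨k, l, -, rfl⟩
    exact ⟨(k, l), rfl⟩
  refine hτ.trans (le_csSup ?_ ⟨j, rfl⟩)
  refine ((Set.finite_range (tauMax f a q p)).subset ?_).bddAbove
  rintro _ ⟨j, rfl⟩
  exact ⟨j, rfl⟩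

lemma nbar_pos_of_ttil_neg (h : ttil f a q p < 0) : 0 < nbar f := by
  refine (sqrt_nonneg _).lt_of_ne' fun h0 => h.not_ge ?_
  refine Real.sSup_nonneg ?_
  rintro _ ⟨j, rfl⟩
  refine Real.sSup_nonneg ?_
  rintro _ ⟨k, l, -, rfl⟩
  rw [show nbar f = 0 from h0, div_zero]

theorem sum_prod_condLaw_le_exp (hq0 : ∀ i j, 0 ≤ q i j) (hq1 : ∀ i j, q i j ≤ 1)
    (hp0 : ∀ i k h, 0 ≤ p i k h) (hp1 : ∀ i k, ∑ h, p i k h = 1)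
    (hf0 : ∀ i k k', f i k 0 = f i k' 0) {j : Fin N} {k l : Fin L} (hkl : k ≠ l)
    (hnbar : 0 < nbar f) {R : ℝ} (hR : 0 ≤ R) (hgap : gap f a q p j k l / nbar f ≤ -R) :
    ∑ h : Fin M → Fin (L + 1) with 0 ≤ ∑ i, (f i k (h i) - f i l (h i)) + (a k - a l),
      ∏ i, condLaw q p i j k (h i) ≤ exp (-R ^ 2 / 2) := by
  have hs : nbar f * R ≤ -gap f a q p j k l := by rw [div_le_iff₀ hnbar] at hgap; linarith
  have hevent : ∀ h : Fin M → Fin (L + 1),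
      0 ≤ ∑ i, (f i k (h i) - f i l (h i)) + (a k - a l) ↔ -gap f a q p j k l ≤
        ∑ i, ((f i k (h i) - f i l (h i)) - ∑ x, condLaw q p i j k x * (f i k x - f i l x)) := by
    intro h
    rw [← sum_condLaw_mul_sub_add_eq_gap hf0]
    simp only [sum_sub_distrib]
    constructor <;> intro <;> linarith
  rw [filter_congr fun h _ => hevent h]
  refine (sum_prod_le_exp_of_le_sum_sub_mean (condLaw_nonneg hq0 hq1 hp0 · j k)
    (sum_condLaw hp1 · j k) (abs_sub_le_spread hf0 · hkl) (by nlinarith)).trans ?_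
  rw [← nbar_sq, exp_le_exp, div_le_div_iff₀ (by positivity) two_pos]
  nlinarith [mul_nonneg hnbar.le hR]

lemma setOf_errRate_lt_subset {Ω : Type*} {y yhat : Fin N → Ω → Fin L} {ε : ℝ} (hN : 0 < N)
    {B : Fin N → Set Ω} [∀ ω j, Decidable (ω ∈ B j)]
    (hB : ∀ j ω, yhat j ω = y j ω → ω ∈ B j) :
    {ω | errRate y yhat ω < ε} ⊆ {ω | ⌈(1 - ε) * N⌉₊ ≤ #{j | ω ∈ B j}} := by
  intro ω hω
  have hsplit : ((#{j | yhat j ω = y j ω} : ℕ) : ℝ) + (#{j | ¬yhat j ω = y j ω} : ℕ) = N := by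
    exact_mod_cast (card_filter_add_card_filter_not (s := univ) _).trans (card_fin N)
  have hwrong : errRate y yhat ω < ε := hω
  rw [errRate, sum_boole, inv_mul_lt_iff₀ (by positivity)] at hwrong
  simp only [ne_eq] at hwrong
  have hcorrect : (1 - ε) * N ≤ #{j | yhat j ω = y j ω} := by linarith
  refine (Nat.ceil_le.2 hcorrect).trans (card_le_card fun j hj => ?_)
  simp only [mem_filter, mem_univ, true_and] at hj ⊢
  exact hB j ω hj

end CrowdDS

open scoped ENNReal in
theorem error_rate_lower_bound_prob_delta_general
    {Ω : Type*} [MeasurableSpace Ω] (μ : Measure Ω) [IsProbabilityMeasure μ]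
    {M N L : ℕ} (hN : 0 < N) (hL : 2 ≤ L)
    (y : Fin N → Ω → Fin L) (Z : Fin M → Fin N → Ω → Fin (L + 1))
    (hym : ∀ j, Measurable (y j)) (hZm : ∀ i j, Measurable (Z i j))
    (pri : Fin L → ℝ) (q : Fin M → Fin N → ℝ) (p : Fin M → Fin L → Fin L → ℝ)
    (hq0 : ∀ i j, 0 ≤ q i j) (hq1 : ∀ i j, q i j ≤ 1)
    (hp0 : ∀ i k h, 0 ≤ p i k h) (hp1 : ∀ i k, ∑ h, p i k h = 1)
    (hprior : ∀ (j : Fin N) (k : Fin L), (μ {ω | y j ω = k}).toReal = pri k)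
    (hlaw : ∀ (j : Fin N) (k : Fin L) (h : Fin M → Fin (L + 1)),
      (μ {ω | y j ω = k ∧ ∀ i, Z i j ω = h i}).toReal
        = pri k * ∏ i, CrowdDS.condLaw q p i j k (h i))
    (hindep : iIndepFun (fun j ω => (y j ω, fun i => Z i j ω)) μ)
    (f : Fin M → Fin L → Fin (L + 1) → ℝ) (hf0 : ∀ i k k', f i k 0 = f i k' 0)
    (a : Fin L → ℝ)
    (yhat : Fin N → Ω → Fin L)
    (hyhat : ∀ (j : Fin N) (ω : Ω) (k : Fin L),
      (∑ i, f i k (Z i j ω)) + a k ≤ (∑ i, f i (yhat j ω) (Z i j ω)) + a (yhat j ω))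
    {ε δ : ℝ} (hε0 : 0 < ε) (hε1 : ε < 1) (hδ0 : 0 < δ) (hδ1 : δ < 1)
    (ht : CrowdDS.ttil f a q p
      ≤ -Real.sqrt (2 * Real.log
          (1 + Real.exp (((-ε * Real.log ε - (1 - ε) * Real.log (1 - ε))
            + (N : ℝ)⁻¹ * Real.log (1 / δ)) / (1 - ε))))) :
    1 - δ ≤ (μ {ω | ε ≤ CrowdDS.errRate y yhat ω}).toReal := by
  classical
  set X := ((-ε * log ε - (1 - ε) * log (1 - ε)) + (N : ℝ)⁻¹ * log (1 / δ)) / (1 - ε)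
  have hG : 1 < 1 + exp X := by linarith [exp_pos X]
  have hR : 0 < sqrt (2 * log (1 + exp X)) := sqrt_pos.2 (by linarith [log_pos hG])
  have hX : binEntropy ε + (N : ℝ)⁻¹ * log δ⁻¹ ≤ (1 - ε) * X := by
    rw [mul_div_cancel₀ _ (by linarith), binEntropy, log_inv, log_inv, one_div, log_inv]
    linarith
  have hnbar := CrowdDS.nbar_pos_of_ttil_neg (ht.trans_lt (neg_neg_of_pos hR))
  have : Nontrivial (Fin L) := Fin.nontrivial_iff_two_le.2 hL
  choose rival hrival using fun k : Fin L => exists_ne k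
  let S : Fin L → Finset (Fin M → Fin (L + 1)) := fun k =>
    {h | 0 ≤ ∑ i, (f i k (h i) - f i (rival k) (h i)) + (a k - a (rival k))}
  let B : Fin N → Set Ω := fun j => {ω | (fun i => Z i j ω) ∈ S (y j ω)}
  have hZjm : ∀ j, Measurable fun ω i => Z i j ω := fun j => measurable_pi_lambda _ (hZm · j)
  have hB : ∀ j, μ.real (B j) ≤ (1 + exp X)⁻¹ := fun j =>
    exp_neg_sqrt_two_mul_log_sq_div_two hG.le ▸
      measureReal_mem_le_of_forall_sum_le (hym j) (hZjm j)
        (fun k h => by simpa only [funext_iff, measureReal_def, hprior] using hlaw j k h)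
        fun k => CrowdDS.sum_prod_condLaw_le_exp hq0 hq1 hp0 hp1 hf0 (hrival k).symm hnbar hR.le
          ((CrowdDS.gap_div_nbar_le_ttil (hrival k).symm).trans ht)
  have hindB : iIndepSet B μ := hindep.iIndepSet_preimage (fun j => (hym j).prodMk (hZjm j))
    (T := fun _ => {v | v.2 ∈ S v.1}) fun _ => (Set.toFinite _).measurableSet
  have hbad := CrowdDS.setOf_errRate_lt_subset hN (y := y) (yhat := yhat) (ε := ε) (B := B)
    fun j ω hj => by
      have hscore := hyhat j ω (rival (y j ω))
      rw [hj] at hscore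
      simp only [B, S, mem_filter, mem_univ, true_and, Set.mem_ofPred_eq, sum_sub_distrib]
      linarith
  refine one_sub_le_probReal_of_probReal_lt_le (calc
    _ ≤ μ.real {ω | ⌈(1 - ε) * N⌉₊ ≤ #{j | ω ∈ B j}} := measureReal_mono hbad
    _ ≤ N.choose ⌈(1 - ε) * N⌉₊ * (1 + exp X)⁻¹ ^ ⌈(1 - ε) * N⌉₊ :=
        (hindB.measureReal_le_card_mem_le hB _).trans_eq (by rw [Fintype.card_fin])
    _ ≤ δ := choose_mul_inv_one_add_exp_pow_le hN hε0 hε1 hδ0 hδ1.le hX (Nat.le_ceil _))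

/-- Under the general Dawid–Skene model with a decomposable aggregation
rule: for all `ε, δ ∈ (0,1)`, with `A = H(ε) + (1/N)·ln(1/δ)` and `G = 1 + exp(A/(1−ε))`,
if `t̃ ≤ −sqrt(2 ln G)`, then `E_N ≥ ε` with probability at least `1 − δ`. -/
theorem error_rate_lower_bound_prob_delta
    {Ω : Type*} [MeasurableSpace Ω] (μ : Measure Ω) [IsProbabilityMeasure μ]
    {M N L : ℕ} (hM : 0 < M) (hN : 0 < N) (hL : 2 ≤ L)
    (y : Fin N → Ω → Fin L) (Z : Fin M → Fin N → Ω → Fin (L + 1))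
    (hym : ∀ j, Measurable (y j)) (hZm : ∀ i j, Measurable (Z i j))
    (pri : Fin L → ℝ) (q : Fin M → Fin N → ℝ) (p : Fin M → Fin L → Fin L → ℝ)
    (hpri : ∀ k, 0 ≤ pri k) (hq0 : ∀ i j, 0 ≤ q i j) (hq1 : ∀ i j, q i j ≤ 1)
    (hp0 : ∀ i k h, 0 ≤ p i k h) (hp1 : ∀ i k, ∑ h, p i k h = 1)
    (hprior : ∀ (j : Fin N) (k : Fin L), (μ {ω | y j ω = k}).toReal = pri k)
    (hlaw : ∀ (j : Fin N) (k : Fin L) (h : Fin M → Fin (L + 1)),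
      (μ {ω | y j ω = k ∧ ∀ i, Z i j ω = h i}).toReal
        = pri k * ∏ i, CrowdDS.condLaw q p i j k (h i))
    (hindep : iIndepFun (fun j ω => (y j ω, fun i => Z i j ω)) μ)
    (f : Fin M → Fin L → Fin (L + 1) → ℝ) (hf0 : ∀ i k k', f i k 0 = f i k' 0)
    (a : Fin L → ℝ)
    (yhat : Fin N → Ω → Fin L) (hyhatm : ∀ j, Measurable (yhat j))
    (hyhat : ∀ (j : Fin N) (ω : Ω) (k : Fin L),
      (∑ i, f i k (Z i j ω)) + a k ≤ (∑ i, f i (yhat j ω) (Z i j ω)) + a (yhat j ω))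
    {ε δ : ℝ} (hε0 : 0 < ε) (hε1 : ε < 1) (hδ0 : 0 < δ) (hδ1 : δ < 1)
    (ht : CrowdDS.ttil f a q p
      ≤ -Real.sqrt (2 * Real.log
          (1 + Real.exp (((-ε * Real.log ε - (1 - ε) * Real.log (1 - ε))
            + (N : ℝ)⁻¹ * Real.log (1 / δ)) / (1 - ε))))) :
    1 - δ ≤ (μ {ω | ε ≤ CrowdDS.errRate y yhat ω}).toReal :=
  error_rate_lower_bound_prob_delta_general μ hN hL y Z hym hZm pri q p hq0 hq1 hp0 hp1 hprior hlaw
    hindep f hf0 a yhat hyhat hε0 hε1 hδ0 hδ1 ht
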